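/- arXiv:1612.07017 — 6 statements merged into one kernel-verified Lean document; each statement's English description precedes it below -/
import Mathlib

section
/- Let V : ℝⁿ → ℝⁿ be Lipschitz continuous with Lipschitz constant L. Then for all θ ∈ ℝ and x,y ∈ ℝⁿ, ‖Ψ₂^V(θ,x) − x − Ψ₂^V(θ,y) + y‖ ≤ |θ|L(1 + |θ|L/2)‖x − y‖. -/
noncomputable section

/-- Euclidean space ℝⁿ. -/
abbrev Vec (n : ℕ) : Type := EuclideanSpace ℝ (Fin n)

/-- Explicit second-order Runge–Kutta map `Ψ₂^V`. -/
def rk2 {n : ℕ} (V : Vec n → Vec n) (θ : ℝ) (x : Vec n) : Vec n :=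
  x + (θ / 2) • V x + (θ / 2) • V (x + θ • V x)

/-! Heun's map is `x ↦ x + (θ/2)(V x + V (e x))` with the Euler step `e x = x + θ V x`; the
Euler step is `(1 + |θ|L)`-Lipschitz, so the increment is Lipschitz with constant
`(|θ|/2)(L + L(1 + |θ|L)) = |θ|L(1 + |θ|L/2)`. -/

section Heun

variable {E : Type*} [NormedAddCommGroup E] [NormedSpace ℝ E] {K : NNReal} {V : E → E}

theorem LipschitzWith.norm_euler_step_sub_le (hV : LipschitzWith K V) (θ : ℝ) (x y : E) :
    ‖x + θ • V x - (y + θ • V y)‖ ≤ (1 + |θ| * K) * ‖x - y‖ := by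
  have hsplit : x + θ • V x - (y + θ • V y) = (x - y) + θ • (V x - V y) := by
    rw [smul_sub]; abel
  calc ‖x + θ • V x - (y + θ • V y)‖
      ≤ ‖x - y‖ + |θ| * ‖V x - V y‖ := by
        rw [hsplit, ← Real.norm_eq_abs, ← norm_smul]; exact norm_add_le _ _
    _ ≤ ‖x - y‖ + |θ| * (K * ‖x - y‖) := by gcongr; exact hV.norm_sub_le x y
    _ = (1 + |θ| * K) * ‖x - y‖ := by ring

theorem LipschitzWith.norm_heun_increment_sub_le (hV : LipschitzWith K V) (θ : ℝ) (x y : E) :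
    ‖(θ / 2) • (V x + V (x + θ • V x)) - (θ / 2) • (V y + V (y + θ • V y))‖ ≤
      |θ| * K * (1 + |θ| * K / 2) * ‖x - y‖ := by
  calc ‖(θ / 2) • (V x + V (x + θ • V x)) - (θ / 2) • (V y + V (y + θ • V y))‖
      = |θ| / 2 * ‖(V x - V y) + (V (x + θ • V x) - V (y + θ • V y))‖ := by
        rw [← smul_sub, norm_smul, Real.norm_eq_abs, abs_div, abs_two, add_sub_add_comm]
    _ ≤ |θ| / 2 * (K * ‖x - y‖ + K * ((1 + |θ| * K) * ‖x - y‖)) := by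
        gcongr
        refine (norm_add_le _ _).trans (add_le_add (hV.norm_sub_le x y) ?_)
        exact (hV.norm_sub_le _ _).trans (by gcongr; exact hV.norm_euler_step_sub_le θ x y)
    _ = |θ| * K * (1 + |θ| * K / 2) * ‖x - y‖ := by ring

end Heun

theorem rk2_sub_self {n : ℕ} (V : Vec n → Vec n) (θ : ℝ) (x : Vec n) :
    rk2 V θ x - x = (θ / 2) • (V x + V (x + θ • V x)) := by
  rw [rk2, smul_add]; abel

/-- stability of the second-order Runge–Kutta map for a Lipschitz
vector field `V` with Lipschitz constant `L`. -/
theorem rk2_stability {n : ℕ} (V : Vec n → Vec n) (L : NNReal)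
    (hV : LipschitzWith L V) :
    ∀ (θ : ℝ) (x y : Vec n),
      ‖rk2 V θ x - x - rk2 V θ y + y‖ ≤
        |θ| * L * (1 + |θ| * L / 2) * ‖x - y‖ := by
  intro θ x y
  have hdiff : rk2 V θ x - x - rk2 V θ y + y = (rk2 V θ x - x) - (rk2 V θ y - y) := by abel
  rw [hdiff, rk2_sub_self, rk2_sub_self]
  exact hV.norm_heun_increment_sub_le θ x y
end
end

section
/- Let T > 0 and let V : ℝⁿ → ℝⁿ be Lipschitz continuous, V ∈ C¹(ℝⁿ,ℝⁿ), with ∂V locally Lipschitz with polynomially growing Lipschitz constant. Then there exist C > 0 and q ∈ ℕ* such that for all (θ,x) ∈ [0,T]×ℝⁿ, ‖exp(θV)x − Ψ₂^V(θ,x)‖ ≤ C(1 + ‖x‖^q)θ³. -/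
/-!
Along the trajectory `γ s = exp(sV)x`, Grönwall's inequality bounds the velocity `V (γ s)`, and
hence `γ s`, linearly in `1 + ‖x‖` for `s ∈ [0, T]`. The acceleration `DV(γ s) (V (γ s))` is then
Lipschitz in `s` with a constant polynomial in `‖x‖`, because `DV` is bounded by the Lipschitz
constant of `V` and is itself polynomially locally Lipschitz. Since `γ θ - x = ∫₀^θ V (γ s) ds`,
the local error splits into the error of the trapezoid rule for this integral, which is `O(θ³)`
times the Lipschitz constant of the acceleration, plus `(θ/2) (V (γ θ) - V (x + θ V x))`, which is
`O(θ³)` because the Euler step `x + θ V x` is accurate to second order.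
-/

noncomputable section

/-- `φ` is the flow of the vector field `V` : `φ θ x = exp(θV)x`. -/
def IsFlow {n : ℕ} (V : Vec n → Vec n) (φ : ℝ → Vec n → Vec n) : Prop :=
  (∀ x, φ 0 x = x) ∧ ∀ (x : Vec n) (t : ℝ), HasDerivAt (fun s => φ s x) (V (φ t x)) t

/-- `D` is locally Lipschitz with polynomially growing Lipschitz constant. -/
def PolyLocLip {E F : Type*} [NormedAddCommGroup E] [NormedAddCommGroup F]
    (D : E → F) : Prop :=
  ∃ K : ℝ, 0 ≤ K ∧ ∃ r : ℕ, ∀ x y, ‖D x - D y‖ ≤ K * (1 + ‖x‖ ^ r + ‖y‖ ^ r) * ‖x - y‖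

open Set MeasureTheory Real
open scoped NNReal

theorem mul_gronwallBound_zero_add (K ε x : ℝ) :
    K * gronwallBound 0 K ε x + ε = ε * exp (K * x) := by
  rcases eq_or_ne K 0 with rfl | hK
  · simp
  · rw [gronwallBound_of_K_ne_0 hK]; field_simp; ring

theorem ContinuousLinearMap.norm_apply_sub_apply_le {E F : Type*} [SeminormedAddCommGroup E]
    [NormedSpace ℝ E] [SeminormedAddCommGroup F] [NormedSpace ℝ F] (A A' : E →L[ℝ] F) (v v' : E) :
    ‖A v - A' v'‖ ≤ ‖A - A'‖ * ‖v‖ + ‖A'‖ * ‖v - v'‖ := by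
  calc ‖A v - A' v'‖ = ‖(A - A') v + A' (v - v')‖ := by simp [map_sub]
    _ ≤ ‖A - A'‖ * ‖v‖ + ‖A'‖ * ‖v - v'‖ :=
      (norm_add_le _ _).trans (add_le_add ((A - A').le_opNorm v) (A'.le_opNorm _))

theorem norm_sub_sub_smul_deriv_le {E : Type*} [NormedAddCommGroup E] [NormedSpace ℝ E]
    {g g' : ℝ → E} {s : Set ℝ} (hs : Convex ℝ s) (hg : ∀ u ∈ s, HasDerivWithinAt g (g' u) s u)
    {m x C : ℝ} (hm : m ∈ s) (hx : x ∈ s) (hC : ∀ u ∈ s, ‖g' u - g' m‖ ≤ C) :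
    ‖g x - g m - (x - m) • g' m‖ ≤ C * |x - m| := by
  have hR : ∀ u ∈ s, HasDerivWithinAt (fun u => g u - (u - m) • g' m) (g' u - g' m) s u :=
    fun u hu => by
      have h := ((hasDerivAt_id u).sub_const m).smul_const (g' m)
      rw [one_smul] at h
      exact (hg u hu).sub h.hasDerivWithinAt
  have := hs.norm_image_sub_le_of_norm_hasDerivWithin_le hR hC hm hx
  rwa [sub_self, zero_smul, sub_zero, sub_right_comm, Real.norm_eq_abs] at this

theorem norm_integral_sub_trapezoid_le {E : Type*} [NormedAddCommGroup E] [NormedSpace ℝ E]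
    [CompleteSpace E] {g g' : ℝ → E} {a b M : ℝ} (hab : a ≤ b)
    (hg : ∀ s ∈ Icc a b, HasDerivWithinAt g (g' s) (Icc a b) s)
    (hg' : ∀ s ∈ Icc a b, ∀ u ∈ Icc a b, ‖g' s - g' u‖ ≤ M * |s - u|) :
    ‖(∫ s in a..b, g s) - ((b - a) / 2) • (g a + g b)‖ ≤ M * (b - a) ^ 3 / 2 := by
  rcases hab.eq_or_lt with rfl | hlt
  · simp
  have hM : 0 ≤ M := nonneg_of_mul_nonneg_left
    ((norm_nonneg _).trans (hg' a ⟨le_rfl, hab⟩ b ⟨hab, le_rfl⟩)) (abs_pos.2 (sub_ne_zero.2 hlt.ne))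
  set m := (a + b) / 2 with hm_def
  have hm : m ∈ Icc a b := ⟨by linarith, by linarith⟩
  have hdist : ∀ u ∈ Icc a b, |u - m| ≤ (b - a) / 2 := fun u hu =>
    abs_le.2 ⟨by linarith [hu.1], by linarith [hu.2]⟩
  set R : ℝ → E := fun s => g s - g m - (s - m) • g' m with hR_def
  have hR : ∀ s ∈ Icc a b, ‖R s‖ ≤ M * (b - a) ^ 2 / 4 := fun s hs =>
    calc ‖R s‖ ≤ M * ((b - a) / 2) * |s - m| :=
          norm_sub_sub_smul_deriv_le (convex_Icc a b) hg hm hs fun u hu =>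
            (hg' u hu m hm).trans (mul_le_mul_of_nonneg_left (hdist u hu) hM)
      _ ≤ M * ((b - a) / 2) * ((b - a) / 2) := by gcongr; exact hdist s hs
      _ = M * (b - a) ^ 2 / 4 := by ring
  have hg_int : IntervalIntegrable g volume a b :=
    ContinuousOn.intervalIntegrable_of_Icc hab fun s hs => (hg s hs).continuousWithinAt
  have hR_int : ∫ s in a..b, R s = (∫ s in a..b, g s) - (b - a) • g m := by
    have h_lin : ∫ s in a..b, (s - m) = 0 := by
      rw [intervalIntegral.integral_comp_sub_right (fun s => s), integral_id]; ring
    have h_smul : Continuous fun s : ℝ => (s - m) • g' m := by fun_prop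
    rw [hR_def, intervalIntegral.integral_sub (hg_int.sub intervalIntegrable_const)
        (h_smul.intervalIntegrable _ _),
      intervalIntegral.integral_sub hg_int intervalIntegrable_const,
      intervalIntegral.integral_const, intervalIntegral.integral_smul_const, h_lin, zero_smul,
      sub_zero]
  -- The trapezoid rule is exact on affine functions, so its error on `g` is its error on `R`.
  have hkey : (∫ s in a..b, g s) - ((b - a) / 2) • (g a + g b)
      = (∫ s in a..b, R s) - ((b - a) / 2) • (R a + R b) := by
    rw [hR_int, hR_def, hm_def]; module
  have hR_int_le : ‖∫ s in a..b, R s‖ ≤ M * (b - a) ^ 2 / 4 * (b - a) := by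
    simpa [abs_of_nonneg (sub_nonneg.2 hab)] using
      intervalIntegral.norm_integral_le_of_norm_le_const fun s hs =>
        hR s (Ioc_subset_Icc_self (uIoc_of_le hab ▸ hs))
  have hR_ab : ‖R a + R b‖ ≤ M * (b - a) ^ 2 / 4 + M * (b - a) ^ 2 / 4 :=
    (norm_add_le _ _).trans (add_le_add (hR a ⟨le_rfl, hab⟩) (hR b ⟨hab, le_rfl⟩))
  rw [hkey]
  calc _ ≤ ‖∫ s in a..b, R s‖ + ‖((b - a) / 2) • (R a + R b)‖ := norm_sub_le _ _
    _ ≤ M * (b - a) ^ 2 / 4 * (b - a)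
        + (b - a) / 2 * (M * (b - a) ^ 2 / 4 + M * (b - a) ^ 2 / 4) := by
      rw [norm_smul, Real.norm_of_nonneg (by linarith)]
      gcongr
    _ = M * (b - a) ^ 3 / 2 := by ring

section Trajectory

variable {E : Type*} [NormedAddCommGroup E] [NormedSpace ℝ E] {V : E → E} {L : ℝ≥0} {γ : ℝ → E}
  {S T : ℝ}

theorem norm_velocity_le_mul_exp (hV : LipschitzWith L V) (hγ : ∀ t, HasDerivAt γ (V (γ t)) t)
    {t : ℝ} (ht : 0 ≤ t) : ‖V (γ t)‖ ≤ ‖V (γ 0)‖ * exp (L * t) := by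
  have hV' : ∀ y, ‖V y‖ ≤ L * ‖y - γ 0‖ + ‖V (γ 0)‖ := fun y =>
    (norm_le_norm_sub_add _ _).trans (by gcongr; exact hV.norm_sub_le y (γ 0))
  have hdisp : ‖γ t - γ 0‖ ≤ gronwallBound 0 L ‖V (γ 0)‖ t := by
    simpa using norm_le_gronwallBound_of_norm_deriv_right_le (f := fun s => γ s - γ 0)
      (fun s _ => ((hγ s).sub_const _).continuousAt.continuousWithinAt)
      (fun s _ => ((hγ s).sub_const _).hasDerivWithinAt) (by simp) (fun s _ => hV' (γ s))
      t ⟨ht, le_rfl⟩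
  calc ‖V (γ t)‖ ≤ L * ‖γ t - γ 0‖ + ‖V (γ 0)‖ := hV' _
    _ ≤ L * gronwallBound 0 L ‖V (γ 0)‖ t + ‖V (γ 0)‖ := by gcongr
    _ = ‖V (γ 0)‖ * exp (L * t) := mul_gronwallBound_zero_add _ _ _

theorem norm_velocity_le (hV : LipschitzWith L V) (hγ : ∀ t, HasDerivAt γ (V (γ t)) t)
    {t : ℝ} (ht : t ∈ Icc 0 T) : ‖V (γ t)‖ ≤ (‖V 0‖ + L) * exp (L * T) * (1 + ‖γ 0‖) := by
  have hV0 : ‖V (γ 0)‖ ≤ (‖V 0‖ + L) * (1 + ‖γ 0‖) := by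
    have := hV.norm_sub_le (γ 0) 0
    rw [sub_zero] at this
    nlinarith [norm_le_norm_sub_add (V (γ 0)) (V 0), norm_nonneg (V 0), norm_nonneg (γ 0),
      L.coe_nonneg]
  calc ‖V (γ t)‖ ≤ ‖V (γ 0)‖ * exp (L * t) := norm_velocity_le_mul_exp hV hγ ht.1
    _ ≤ (‖V 0‖ + L) * (1 + ‖γ 0‖) * exp (L * T) := by gcongr; exact ht.2
    _ = (‖V 0‖ + L) * exp (L * T) * (1 + ‖γ 0‖) := by ring

theorem norm_sub_le_of_norm_velocity_le (hγ : ∀ t, HasDerivAt γ (V (γ t)) t)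
    (hS : ∀ t ∈ Icc 0 T, ‖V (γ t)‖ ≤ S) {s u : ℝ} (hs : s ∈ Icc 0 T) (hu : u ∈ Icc 0 T) :
    ‖γ s - γ u‖ ≤ S * |s - u| :=
  Convex.norm_image_sub_le_of_norm_hasDerivWithin_le (fun t _ => (hγ t).hasDerivWithinAt) hS
    (convex_Icc 0 T) hu hs

theorem norm_le_of_norm_velocity_le (hγ : ∀ t, HasDerivAt γ (V (γ t)) t)
    (hS : ∀ t ∈ Icc 0 T, ‖V (γ t)‖ ≤ S) {t : ℝ} (ht : t ∈ Icc 0 T) :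
    ‖γ t‖ ≤ ‖γ 0‖ + S * T := by
  have := norm_sub_le_of_norm_velocity_le hγ hS ht ⟨le_rfl, ht.1.trans ht.2⟩
  have hS0 : 0 ≤ S := (norm_nonneg _).trans (hS t ht)
  rw [sub_zero, abs_of_nonneg ht.1] at this
  nlinarith [norm_le_norm_add_norm_sub' (γ t) (γ 0), ht.2]

theorem norm_sub_sub_smul_le (hV : LipschitzWith L V) (hγ : ∀ t, HasDerivAt γ (V (γ t)) t)
    (hS : ∀ t ∈ Icc 0 T, ‖V (γ t)‖ ≤ S) {θ : ℝ} (hθ : θ ∈ Icc 0 T) :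
    ‖γ θ - γ 0 - θ • V (γ 0)‖ ≤ L * S * θ ^ 2 := by
  have hsub : Icc 0 θ ⊆ Icc 0 T := Icc_subset_Icc le_rfl hθ.2
  have hS0 : 0 ≤ S := (norm_nonneg _).trans (hS θ hθ)
  have hderiv : ∀ s, HasDerivAt (fun s => γ s - s • V (γ 0)) (V (γ s) - V (γ 0)) s := fun s => by
    have h := (hasDerivAt_id s).smul_const (V (γ 0))
    rw [one_smul] at h
    exact (hγ s).sub h
  have hbound : ∀ s ∈ Icc 0 θ, ‖V (γ s) - V (γ 0)‖ ≤ L * S * θ := fun s hs => by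
    have := norm_sub_le_of_norm_velocity_le hγ hS (hsub hs) (hsub ⟨le_rfl, hθ.1⟩)
    rw [sub_zero, abs_of_nonneg hs.1] at this
    calc ‖V (γ s) - V (γ 0)‖ ≤ L * ‖γ s - γ 0‖ := hV.norm_sub_le _ _
      _ ≤ L * (S * θ) := by gcongr; exact this.trans (mul_le_mul_of_nonneg_left hs.2 hS0)
      _ = L * S * θ := by ring
  have := Convex.norm_image_sub_le_of_norm_hasDerivWithin_le
    (fun s _ => (hderiv s).hasDerivWithinAt) hbound (convex_Icc 0 θ) ⟨le_rfl, hθ.1⟩ ⟨hθ.1, le_rfl⟩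
  rw [zero_smul, sub_zero, sub_right_comm, sub_zero, Real.norm_of_nonneg hθ.1] at this
  linarith

theorem norm_fderiv_velocity_sub_le (hV : LipschitzWith L V) {K : ℝ} {r : ℕ} (hK : 0 ≤ K)
    (hJ : ∀ y z, ‖fderiv ℝ V y - fderiv ℝ V z‖ ≤ K * (1 + ‖y‖ ^ r + ‖z‖ ^ r) * ‖y - z‖)
    (hγ : ∀ t, HasDerivAt γ (V (γ t)) t) (hS : ∀ t ∈ Icc 0 T, ‖V (γ t)‖ ≤ S) {B : ℝ}
    (hB : ∀ t ∈ Icc 0 T, ‖γ t‖ ≤ B) {s u : ℝ} (hs : s ∈ Icc 0 T) (hu : u ∈ Icc 0 T) :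
    ‖fderiv ℝ V (γ s) (V (γ s)) - fderiv ℝ V (γ u) (V (γ u))‖
      ≤ (K * (1 + 2 * B ^ r) * S + L ^ 2) * S * |s - u| := by
  have hB0 : 0 ≤ B := (norm_nonneg _).trans (hB s hs)
  have hS0 : 0 ≤ S := (norm_nonneg _).trans (hS s hs)
  have hγsu := norm_sub_le_of_norm_velocity_le hγ hS hs hu
  have hJsu : ‖fderiv ℝ V (γ s) - fderiv ℝ V (γ u)‖ ≤ K * (1 + 2 * B ^ r) * (S * |s - u|) := by
    refine (hJ _ _).trans ?_
    have := pow_le_pow_left₀ (norm_nonneg _) (hB s hs) r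
    have := pow_le_pow_left₀ (norm_nonneg _) (hB u hu) r
    gcongr K * ?_ * ?_
    linarith
  calc _ ≤ ‖fderiv ℝ V (γ s) - fderiv ℝ V (γ u)‖ * ‖V (γ s)‖
        + ‖fderiv ℝ V (γ u)‖ * ‖V (γ s) - V (γ u)‖ :=
      ContinuousLinearMap.norm_apply_sub_apply_le _ _ _ _
    _ ≤ K * (1 + 2 * B ^ r) * (S * |s - u|) * S + L * (L * (S * |s - u|)) := by
      gcongr
      · exact hS s hs
      · exact norm_fderiv_le_of_lipschitz ℝ hV
      · exact (hV.norm_sub_le _ _).trans (by gcongr)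
    _ = (K * (1 + 2 * B ^ r) * S + L ^ 2) * S * |s - u| := by ring

theorem norm_sub_rk2_le [CompleteSpace E] (hV : LipschitzWith L V)
    (hγ : ∀ t, HasDerivAt γ (V (γ t)) t) {g' : ℝ → E}
    (hg : ∀ t, HasDerivAt (fun t => V (γ t)) (g' t) t) {M : ℝ}
    (hg' : ∀ s ∈ Icc 0 T, ∀ u ∈ Icc 0 T, ‖g' s - g' u‖ ≤ M * |s - u|)
    (hS : ∀ t ∈ Icc 0 T, ‖V (γ t)‖ ≤ S) {θ : ℝ} (hθ : θ ∈ Icc 0 T) :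
    ‖γ θ - (γ 0 + (θ / 2) • V (γ 0) + (θ / 2) • V (γ 0 + θ • V (γ 0)))‖
      ≤ (M + L ^ 2 * S) / 2 * θ ^ 3 := by
  have hsub : Icc 0 θ ⊆ Icc 0 T := Icc_subset_Icc le_rfl hθ.2
  have htrap := norm_integral_sub_trapezoid_le hθ.1 (fun s _ => (hg s).hasDerivWithinAt)
    (fun s hs u hu => hg' s (hsub hs) u (hsub hu))
  have hγc : Continuous γ := continuous_iff_continuousAt.2 fun t => (hγ t).continuousAt
  rw [intervalIntegral.integral_eq_sub_of_hasDerivAt (fun t _ => hγ t)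
    ((hV.continuous.comp hγc).intervalIntegrable _ _), sub_zero] at htrap
  have hsecond : ‖(θ / 2) • (V (γ θ) - V (γ 0 + θ • V (γ 0)))‖ ≤ θ / 2 * (L * (L * S * θ ^ 2)) := by
    rw [norm_smul, Real.norm_of_nonneg (by linarith [hθ.1])]
    refine mul_le_mul_of_nonneg_left ((hV.norm_sub_le _ _).trans ?_) (by linarith [hθ.1])
    rw [← sub_sub]
    gcongr
    exact norm_sub_sub_smul_le hV hγ hS hθ
  calc _ = ‖((γ θ - γ 0) - (θ / 2) • (V (γ 0) + V (γ θ)))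
        + (θ / 2) • (V (γ θ) - V (γ 0 + θ • V (γ 0)))‖ := by congr 1; module
    _ ≤ M * θ ^ 3 / 2 + θ / 2 * (L * (L * S * θ ^ 2)) := norm_add_le_of_le htrap hsecond
    _ = (M + L ^ 2 * S) / 2 * θ ^ 3 := by ring

end Trajectory

theorem rk2_local_error_coeff_le {K L c T a : ℝ} (r : ℕ) (hK : 0 ≤ K) (hc : 0 ≤ c) (hT : 0 ≤ T)
    (ha : 0 ≤ a) :
    ((K * (1 + 2 * (a + c * (1 + a) * T) ^ r) * (c * (1 + a)) + L ^ 2) * (c * (1 + a))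
        + L ^ 2 * (c * (1 + a))) / 2
      ≤ ((K * (1 + 2 * (1 + c * T) ^ r) * c + 2 * L ^ 2) * c * 2 ^ r + 1) * (1 + a ^ (r + 2)) := by
  set P := 1 + a
  have hP : 1 ≤ P := by linarith
  have hB : 1 + 2 * (a + c * P * T) ^ r ≤ (1 + 2 * (1 + c * T) ^ r) * P ^ r := by
    have h := pow_le_pow_left₀ (by positivity) (show a + c * P * T ≤ (1 + c * T) * P by nlinarith) r
    rw [mul_pow] at h
    nlinarith [one_le_pow₀ (n := r) hP]
  have hpow : P ^ (r + 2) ≤ 2 ^ (r + 1) * (1 + a ^ (r + 2)) := by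
    simpa using add_pow_le zero_le_one ha (r + 2)
  set A := (K * (1 + 2 * (1 + c * T) ^ r) * c + 2 * L ^ 2) * c
  have hA : 0 ≤ A := by positivity
  calc _ = (K * (1 + 2 * (a + c * P * T) ^ r) * c ^ 2 * P ^ 2 + 2 * L ^ 2 * c * P) / 2 := by ring
    _ ≤ (K * ((1 + 2 * (1 + c * T) ^ r) * P ^ r) * c ^ 2 * P ^ 2
        + 2 * L ^ 2 * c * P ^ (r + 2)) / 2 := by
      gcongr
      exact le_self_pow₀ hP (by omega)
    _ = A * P ^ (r + 2) / 2 := by ring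
    _ ≤ A * (2 ^ (r + 1) * (1 + a ^ (r + 2))) / 2 := by gcongr
    _ = A * 2 ^ r * (1 + a ^ (r + 2)) := by ring
    _ ≤ (A * 2 ^ r + 1) * (1 + a ^ (r + 2)) := by gcongr; linarith

/-- local error of the second-order Runge–Kutta scheme. -/
theorem rk2_local_error {n : ℕ} (T : ℝ) (hT : 0 < T) (V : Vec n → Vec n)
    (hLip : ∃ L : NNReal, LipschitzWith L V)
    (hC1 : ContDiff ℝ 1 V)
    (hJac : PolyLocLip (fun x => fderiv ℝ V x))
    (φ : ℝ → Vec n → Vec n) (hφ : IsFlow V φ) :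
    ∃ C : ℝ, 0 < C ∧ ∃ q : ℕ, 1 ≤ q ∧
      ∀ θ ∈ Set.Icc (0 : ℝ) T, ∀ x : Vec n,
        ‖φ θ x - rk2 V θ x‖ ≤ C * (1 + ‖x‖ ^ q) * θ ^ 3 := by
  obtain ⟨L, hL⟩ := hLip
  obtain ⟨K, hK, r, hJ⟩ := hJac
  set c := (‖V 0‖ + L) * exp (L * T)
  refine ⟨(K * (1 + 2 * (1 + c * T) ^ r) * c + 2 * L ^ 2) * c * 2 ^ r + 1, by positivity, r + 2,
    by omega, fun θ hθ x => ?_⟩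
  have hγ : ∀ t, HasDerivAt (φ · x) (V (φ t x)) t := hφ.2 x
  have hS : ∀ t ∈ Icc 0 T, ‖V (φ t x)‖ ≤ c * (1 + ‖x‖) := fun t ht => by
    simpa [hφ.1 x] using norm_velocity_le hL hγ ht
  have hB : ∀ t ∈ Icc 0 T, ‖φ t x‖ ≤ ‖x‖ + c * (1 + ‖x‖) * T := fun t ht => by
    simpa [hφ.1 x] using norm_le_of_norm_velocity_le hγ hS ht
  have hacc : ∀ t, HasDerivAt (fun t => V (φ t x)) (fderiv ℝ V (φ t x) (V (φ t x))) t := fun t =>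
    ((hC1.differentiable one_ne_zero) _).hasFDerivAt.comp_hasDerivAt t (hγ t)
  have herr := norm_sub_rk2_le hL hγ hacc
    (fun s hs u hu => norm_fderiv_velocity_sub_le hL hK hJ hγ hS hB hs hu) hS hθ
  rw [hφ.1 x] at herr
  exact herr.trans (mul_le_mul_of_nonneg_right
    (rk2_local_error_coeff_le r hK (by positivity) hT.le (norm_nonneg x)) (pow_nonneg hθ.1 3))
end
end

section
/- If V ∈ C¹(ℝⁿ,ℝⁿ) is Lipschitz continuous and bounded, and its Jacobian ∂V is Lipschitz continuous, then V satisfies condition (H). -/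
noncomputable section

/-- Condition (H) on a vector field `V`. -/
def CondH {n : ℕ} (V : Vec n → Vec n) : Prop :=
  ∃ C : ℝ, 0 < C ∧ ∀ (θ : ℝ) (x y z w : Vec n),
    ‖V (x + θ • V z) + V y - V x - V (y + θ • V w)‖ ≤
      C * |θ| * (‖x - y‖ + (1 + |θ|) * ‖z - w‖)

/-!
Split `V(x + θV z) + V y - V x - V(y + θV w)` as the second difference
`(V(x + h) - V x) - (V(y + h) - V y)` with `h = θV z`, plus `V(y + θV z) - V(y + θV w)`.
By the mean value theorem applied to `u ↦ V(u + h) - V u`, whose derivative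
`∂V(u + h) - ∂V(u)` has norm at most `L'‖h‖ ≤ L'M|θ|`, the first is at most
`L'M|θ|‖x - y‖`; the Lipschitz bound, used twice, bounds the second by `L²|θ|‖z - w‖`.
-/

section

variable {E F : Type*} [NormedAddCommGroup E] [NormedSpace ℝ E] [NormedAddCommGroup F]

theorem norm_sub_sub_sub_le_of_lipschitzWith_fderiv [NormedSpace ℝ F] {f : E → F}
    {K : NNReal} (hf : Differentiable ℝ f) (hf' : LipschitzWith K (fderiv ℝ f)) (a b h : E) :
    ‖f (a + h) - f a - (f (b + h) - f b)‖ ≤ K * ‖h‖ * ‖a - b‖ := by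
  have hderiv : ∀ u, HasFDerivAt (fun u => f (u + h) - f u)
      (fderiv ℝ f (u + h) - fderiv ℝ f u) u := fun u =>
    ((hasFDerivAt_comp_add_right h).2 (hf (u + h)).hasFDerivAt).sub (hf u).hasFDerivAt
  have hbound : ∀ u ∈ Set.univ, ‖fderiv ℝ f (u + h) - fderiv ℝ f u‖ ≤ K * ‖h‖ := fun u _ => by
    simpa [dist_eq_norm] using hf'.dist_le_mul (u + h) u
  simpa using convex_univ.norm_image_sub_le_of_norm_hasFDerivWithin_le
    (fun u _ => (hderiv u).hasFDerivWithinAt) hbound (Set.mem_univ b) (Set.mem_univ a)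

theorem norm_add_smul_sub_add_smul_le_of_lipschitzWith {f : E → F} {K : NNReal}
    (hf : LipschitzWith K f) (y u v : E) (θ : ℝ) :
    ‖f (y + θ • u) - f (y + θ • v)‖ ≤ K * (|θ| * ‖u - v‖) := by
  simpa [dist_eq_norm, ← smul_sub, norm_smul] using hf.dist_le_mul (y + θ • u) (y + θ • v)

theorem norm_condH_difference_le {V : E → E} {L L' : NNReal} {M : ℝ}
    (hV : Differentiable ℝ V) (hL : LipschitzWith L V) (hM : ∀ x, ‖V x‖ ≤ M)
    (hL' : LipschitzWith L' (fderiv ℝ V)) (θ : ℝ) (x y z w : E) :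
    ‖V (x + θ • V z) + V y - V x - V (y + θ • V w)‖ ≤
      |θ| * (L' * M * ‖x - y‖ + L * L * ‖z - w‖) := by
  have hsecond := norm_sub_sub_sub_le_of_lipschitzWith_fderiv hV hL' x y (θ • V z)
  have hshift := norm_add_smul_sub_add_smul_le_of_lipschitzWith hL y (V z) (V w) θ
  have hθVz : ‖θ • V z‖ ≤ |θ| * M := by
    rw [norm_smul, Real.norm_eq_abs]
    exact mul_le_mul_of_nonneg_left (hM z) (abs_nonneg θ)
  have hVzw : ‖V z - V w‖ ≤ L * ‖z - w‖ := by
    simpa [dist_eq_norm] using hL.dist_le_mul z w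
  calc ‖V (x + θ • V z) + V y - V x - V (y + θ • V w)‖
      = ‖(V (x + θ • V z) - V x - (V (y + θ • V z) - V y)) +
          (V (y + θ • V z) - V (y + θ • V w))‖ := by congr 1; abel
    _ ≤ L' * ‖θ • V z‖ * ‖x - y‖ + L * (|θ| * ‖V z - V w‖) :=
        (norm_add_le _ _).trans (add_le_add hsecond hshift)
    _ ≤ L' * (|θ| * M) * ‖x - y‖ + L * (|θ| * (L * ‖z - w‖)) := by gcongr
    _ = |θ| * (L' * M * ‖x - y‖ + L * L * ‖z - w‖) := by ring

end

/-- a bounded Lipschitz `C¹` vector field whose Jacobian is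
Lipschitz satisfies condition (H). -/
theorem c1_bounded_lipschitz_jacobian_satisfies_condH {n : ℕ} (V : Vec n → Vec n)
    (hC1 : ContDiff ℝ 1 V)
    (hLip : ∃ L : NNReal, LipschitzWith L V)
    (hBdd : ∃ M : ℝ, ∀ x, ‖V x‖ ≤ M)
    (hJac : ∃ L' : NNReal, LipschitzWith L' (fun x => fderiv ℝ V x)) :
    CondH V := by
  obtain ⟨L, hL⟩ := hLip
  obtain ⟨M, hM⟩ := hBdd
  obtain ⟨L', hL'⟩ := hJac
  have hM0 : 0 ≤ M := (norm_nonneg _).trans (hM 0)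
  set C : ℝ := L' * M + L * L + 1
  refine ⟨C, by positivity, fun θ x y z w => ?_⟩
  have hLL : (L : ℝ) * L ≤ C := by simp only [C]; nlinarith [L'.coe_nonneg]
  have hL'M : (L' : ℝ) * M ≤ C := by simp only [C]; nlinarith [L.coe_nonneg]
  have hzw : ‖z - w‖ ≤ (1 + |θ|) * ‖z - w‖ :=
    le_mul_of_one_le_left (norm_nonneg _) (le_add_of_nonneg_right (abs_nonneg θ))
  calc ‖V (x + θ • V z) + V y - V x - V (y + θ • V w)‖
      ≤ |θ| * (L' * M * ‖x - y‖ + L * L * ‖z - w‖) :=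
        norm_condH_difference_le (hC1.differentiable one_ne_zero) hL hM hL' θ x y z w
    _ ≤ |θ| * (C * ‖x - y‖ + C * ((1 + |θ|) * ‖z - w‖)) := by gcongr
    _ = C * |θ| * (‖x - y‖ + (1 + |θ|) * ‖z - w‖) := by ring
end
end

section
/- Let T > 0 and let V : ℝⁿ → ℝⁿ be Lipschitz continuous, V ∈ C¹(ℝⁿ,ℝⁿ), such that the map x ↦ ∂V(x)V(x) is locally Lipschitz with polynomially growing Lipschitz constant. Then there exist C > 0 and q ∈ ℕ* such that for all (θ,x) ∈ [0,T]×ℝⁿ, ‖exp(θV)x − x − θV(x) − (θ²/2)∂V V(x)‖ ≤ C(1 + ‖x‖^q)θ³, where ∂V V(x) = ∂V(x)V(x). -/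
noncomputable section

open Real Set

lemma aux_pow_le (a : ℝ) (ha : 0 ≤ a) {m q : ℕ} (h : m ≤ q) : a ^ m ≤ 1 + a ^ q := by
  rcases le_total a 1 with h1 | h1
  · have := pow_le_one₀ ha h1 (n := m)
    nlinarith [pow_nonneg ha q]
  · have := one_le_pow₀ (n := q) h1
    calc a ^ m ≤ a ^ q := pow_le_pow_right₀ h1 h
    _ ≤ 1 + a ^ q := by linarith

lemma aux_one_add_pow (a : ℝ) (ha : 0 ≤ a) (r : ℕ) : (1 + a) ^ r ≤ 2 ^ r * (1 + a ^ r) := by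
  rcases le_total a 1 with h1 | h1
  · have h2 : (1 + a) ^ r ≤ 2 ^ r := pow_le_pow_left₀ (by linarith) (by linarith) r
    nlinarith [pow_nonneg ha r, pow_pos (show (0:ℝ) < 2 by norm_num) r]
  · have h2 : (1 + a) ^ r ≤ (2 * a) ^ r := pow_le_pow_left₀ (by linarith) (by linarith) r
    rw [mul_pow] at h2
    nlinarith [pow_pos (show (0:ℝ) < 2 by norm_num) r, pow_nonneg ha r]

lemma aux_exp (u : ℝ) : Real.exp u - 1 ≤ u * Real.exp u := by
  have h1 : 1 - u ≤ Real.exp (-u) := by linarith [Real.add_one_le_exp (-u)]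
  have h2 : Real.exp (-u) * Real.exp u = 1 := by rw [← Real.exp_add]; simp
  nlinarith [Real.exp_pos u]

lemma drift {n : ℕ} (T L : ℝ) (hL : 0 < L) (V : Vec n → Vec n)
    (hLipV : ∀ a b : Vec n, ‖V a - V b‖ ≤ L * ‖a - b‖)
    (φ : ℝ → Vec n → Vec n) (hφ : IsFlow V φ) (x : Vec n) :
    ∀ t ∈ Icc (0:ℝ) T, ‖φ t x - x‖ ≤ Real.exp (L * T) * ‖V x‖ * t := by
  have hcont : Continuous fun s => φ s x :=
    continuous_iff_continuousAt.2 fun t => (hφ.2 x t).continuousAt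
  have key := norm_le_gronwallBound_of_norm_deriv_right_le
    (f := fun s => φ s x - x) (f' := fun s => V (φ s x)) (δ := 0) (K := L) (ε := ‖V x‖)
    (a := 0) (b := T)
    ((hcont.sub continuous_const).continuousOn)
    (fun t _ => ((hφ.2 x t).sub_const x).hasDerivWithinAt)
    (by simp [hφ.1])
    (fun t _ => by
      calc ‖V (φ t x)‖ ≤ ‖V (φ t x) - V x‖ + ‖V x‖ := by
            simpa using norm_add_le (V (φ t x) - V x) (V x)
        _ ≤ L * ‖φ t x - x‖ + ‖V x‖ := by linarith [hLipV (φ t x) x]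
    )
  intro t ht
  have h1 := key t ht
  rw [gronwallBound_of_K_ne_0 hL.ne'] at h1
  simp only [sub_zero] at h1
  have hVx : (0:ℝ) ≤ ‖V x‖ := norm_nonneg _
  have h2 : Real.exp (L * t) - 1 ≤ L * t * Real.exp (L * T) := by
    have := aux_exp (L * t)
    have hmon : Real.exp (L * t) ≤ Real.exp (L * T) :=
      Real.exp_le_exp.2 (by nlinarith [ht.2, hL.le])
    have ht0 := ht.1
    nlinarith [Real.exp_pos (L * t), mul_nonneg (mul_nonneg hL.le ht0) (sub_nonneg.2 hmon)]
  have h3 : ‖V x‖ / L * (Real.exp (L * t) - 1) ≤ Real.exp (L * T) * ‖V x‖ * t := by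
    rw [div_mul_eq_mul_div, div_le_iff₀ hL]
    have he : (0:ℝ) ≤ Real.exp (L * t) - 1 := by
      have : (1:ℝ) ≤ Real.exp (L * t) := Real.one_le_exp (by nlinarith [ht.1, hL.le])
      linarith
    nlinarith
  calc ‖φ t x - x‖ ≤ 0 * Real.exp (L * t) + ‖V x‖ / L * (Real.exp (L * t) - 1) := h1
    _ ≤ Real.exp (L * T) * ‖V x‖ * t := by rw [zero_mul, zero_add]; exact h3

/-- second-order Taylor expansion of the flow of `V`,
where `∂V V (x) = (fderiv ℝ V x) (V x)`. -/
theorem flow_taylor2 {n : ℕ} (T : ℝ) (hT : 0 < T) (V : Vec n → Vec n)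
    (hLip : ∃ L : NNReal, LipschitzWith L V)
    (hC1 : ContDiff ℝ 1 V)
    (hDVV : PolyLocLip (fun x => fderiv ℝ V x (V x)))
    (φ : ℝ → Vec n → Vec n) (hφ : IsFlow V φ) :
    ∃ C : ℝ, 0 < C ∧ ∃ q : ℕ, 1 ≤ q ∧
      ∀ θ ∈ Set.Icc (0 : ℝ) T, ∀ x : Vec n,
        ‖φ θ x - x - θ • V x - (θ ^ 2 / 2) • fderiv ℝ V x (V x)‖ ≤
          C * (1 + ‖x‖ ^ q) * θ ^ 3 := by
  obtain ⟨L₀, hL₀⟩ := hLip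
  have hL : (0:ℝ) < (L₀ : ℝ) + 1 := by positivity
  have hLipV : ∀ a b : Vec n, ‖V a - V b‖ ≤ ((L₀:ℝ) + 1) * ‖a - b‖ := by
    intro a b
    have h := hL₀.dist_le_mul a b
    rw [dist_eq_norm, dist_eq_norm] at h
    nlinarith [norm_nonneg (a - b), L₀.2]
  obtain ⟨K, hK0, r, hr⟩ := hDVV
  simp only at hr
  -- opaque drift constant E
  obtain ⟨E, hE1, hdrift⟩ : ∃ E : ℝ, 1 ≤ E ∧
      ∀ (x : Vec n), ∀ t ∈ Icc (0:ℝ) T, ‖φ t x - x‖ ≤ E * ‖V x‖ * t :=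
    ⟨Real.exp (((L₀:ℝ) + 1) * T), Real.one_le_exp (by positivity),
      fun x => drift T _ hL V hLipV φ hφ x⟩
  have hE0 : (0:ℝ) < E := lt_of_lt_of_le one_pos hE1
  -- opaque linear growth constant A
  obtain ⟨A, hA0, hVb⟩ : ∃ A : ℝ, 0 < A ∧ ∀ y : Vec n, ‖V y‖ ≤ A * (1 + ‖y‖) := by
    refine ⟨‖V 0‖ + ((L₀:ℝ) + 1), by positivity, fun y => ?_⟩
    have h := hLipV y 0
    simp only [sub_zero] at h
    have h2 : ‖V y‖ ≤ ‖V y - V 0‖ + ‖V 0‖ := by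
      simpa using norm_add_le (V y - V 0) (V 0)
    nlinarith [norm_nonneg y, norm_nonneg (V 0)]
  -- refined drift bound
  have hd : ∀ (x : Vec n), ∀ s ∈ Icc (0:ℝ) T, ‖φ s x - x‖ ≤ E * A * (1 + ‖x‖) * s := by
    intro x s hs
    have h1 := hdrift x s hs
    have h2 := hVb x
    nlinarith [mul_le_mul_of_nonneg_left h2 (mul_nonneg hE0.le hs.1)]
  -- bound on ‖φ s x‖
  have hφn : ∀ (x : Vec n), ∀ s ∈ Icc (0:ℝ) T, ‖φ s x‖ ≤ (1 + E * A * T) * (1 + ‖x‖) := by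
    intro x s hs
    have h1 := hd x s hs
    have h2 : ‖φ s x‖ ≤ ‖φ s x - x‖ + ‖x‖ := by
      simpa using norm_add_le (φ s x - x) x
    have h3 : E * A * (1 + ‖x‖) * s ≤ E * A * (1 + ‖x‖) * T :=
      mul_le_mul_of_nonneg_left hs.2 (by positivity)
    nlinarith [norm_nonneg x, mul_pos hE0 hA0]
  -- polynomial bound constant P
  obtain ⟨P, hP0, hpoly⟩ : ∃ P : ℝ, 0 < P ∧ ∀ (x : Vec n), ∀ s ∈ Icc (0:ℝ) T,
      1 + ‖φ s x‖ ^ r + ‖x‖ ^ r ≤ P * (1 + ‖x‖ ^ r) := by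
    have hB0 : (0:ℝ) < 1 + E * A * T := by nlinarith [mul_pos (mul_pos hE0 hA0) hT]
    refine ⟨2 + (1 + E * A * T) ^ r * 2 ^ r, by positivity, fun x s hs => ?_⟩
    have h1 : ‖φ s x‖ ^ r ≤ ((1 + E * A * T) * (1 + ‖x‖)) ^ r :=
      pow_le_pow_left₀ (norm_nonneg _) (hφn x s hs) r
    rw [mul_pow] at h1
    have h2 := aux_one_add_pow ‖x‖ (norm_nonneg x) r
    have h3 : (0:ℝ) ≤ (1 + E * A * T) ^ r := by positivity
    have h4 : (0:ℝ) ≤ ‖x‖ ^ r := by positivity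
    nlinarith [mul_le_mul_of_nonneg_left h2 h3]
  set q : ℕ := r + 1 with hq
  have hmix : ∀ x : Vec n, (1 + ‖x‖ ^ r) * (1 + ‖x‖) ≤ 3 * (1 + ‖x‖ ^ q) := by
    intro x
    have ha0 : (0:ℝ) ≤ ‖x‖ := norm_nonneg x
    have h1 : ‖x‖ ≤ 1 + ‖x‖ ^ q := by
      have := aux_pow_le ‖x‖ ha0 (show 1 ≤ q by omega)
      simpa using this
    have h2 : ‖x‖ ^ r ≤ 1 + ‖x‖ ^ q := aux_pow_le ‖x‖ ha0 (by omega)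
    have h3 : ‖x‖ ^ r * ‖x‖ = ‖x‖ ^ q := by rw [hq, pow_succ]
    nlinarith [pow_nonneg ha0 q, pow_nonneg ha0 r]
  -- final constant
  obtain ⟨M, hM0, hMdef⟩ : ∃ M : ℝ, 0 ≤ M ∧ M = 3 * K * P * E * A :=
    ⟨3 * K * P * E * A, by positivity, rfl⟩
  refine ⟨M + 1, by positivity, q, by omega, ?_⟩
  intro θ hθ x
  have hθ0 : 0 ≤ θ := hθ.1
  have hθT : θ ≤ T := hθ.2
  have hVdiff : Differentiable ℝ V := hC1.differentiable one_ne_zero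
  have hg : ∀ t : ℝ, HasDerivAt (fun s => φ s x) (V (φ t x)) t := hφ.2 x
  have haq : (0:ℝ) ≤ 1 + ‖x‖ ^ q := by positivity
  -- second-derivative bound
  have hstep : ∀ s ∈ Icc (0:ℝ) θ,
      ‖fderiv ℝ V (φ s x) (V (φ s x)) - fderiv ℝ V x (V x)‖ ≤ M * (1 + ‖x‖ ^ q) * s := by
    intro s hs
    have hsT : s ∈ Icc (0:ℝ) T := ⟨hs.1, hs.2.trans hθT⟩
    have hs0 : (0:ℝ) ≤ s := hs.1
    calc ‖fderiv ℝ V (φ s x) (V (φ s x)) - fderiv ℝ V x (V x)‖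
        ≤ K * (1 + ‖φ s x‖ ^ r + ‖x‖ ^ r) * ‖φ s x - x‖ := hr (φ s x) x
      _ ≤ K * (P * (1 + ‖x‖ ^ r)) * (E * A * (1 + ‖x‖) * s) := by
          apply mul_le_mul
          · exact mul_le_mul_of_nonneg_left (hpoly x s hsT) hK0
          · exact hd x s hsT
          · exact norm_nonneg _
          · positivity
      _ = (K * P * E * A * s) * ((1 + ‖x‖ ^ r) * (1 + ‖x‖)) := by ring
      _ ≤ (K * P * E * A * s) * (3 * (1 + ‖x‖ ^ q)) := by
          apply mul_le_mul_of_nonneg_left (hmix x)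
          positivity
      _ = M * (1 + ‖x‖ ^ q) * s := by rw [hMdef]; ring
  -- derivatives of the Taylor remainders
  have hWderiv : ∀ s : ℝ, HasDerivAt (fun t => V (φ t x))
      (fderiv ℝ V (φ s x) (V (φ s x))) s := fun s =>
    ((hVdiff (φ s x)).hasFDerivAt).comp_hasDerivAt s (hg s)
  have hh1deriv : ∀ s : ℝ, HasDerivAt
      (fun t => V (φ t x) - V x - t • fderiv ℝ V x (V x))
      (fderiv ℝ V (φ s x) (V (φ s x)) - fderiv ℝ V x (V x)) s := by
    intro s
    have h1 := ((hWderiv s).sub_const (V x)).sub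
      ((hasDerivAt_id s).smul_const (fderiv ℝ V x (V x)))
    exact h1.congr_deriv (by simp)
  have hsq : ∀ s : ℝ, HasDerivAt (fun t : ℝ => t ^ 2 / 2) s s := by
    intro s
    have := (hasDerivAt_pow 2 s).div_const 2
    simpa using this
  have hhderiv : ∀ s : ℝ, HasDerivAt
      (fun t => φ t x - x - t • V x - (t ^ 2 / 2) • fderiv ℝ V x (V x))
      (V (φ s x) - V x - s • fderiv ℝ V x (V x)) s := by
    intro s
    have h1 := (((hg s).sub_const x).sub
      ((hasDerivAt_id s).smul_const (V x))).sub
      ((hsq s).smul_const (fderiv ℝ V x (V x)))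
    exact h1.congr_deriv (by simp)
  -- first mean value inequality
  have hmv1 := norm_image_sub_le_of_norm_deriv_le_segment' (a := 0) (b := θ)
    (f := fun t => V (φ t x) - V x - t • fderiv ℝ V x (V x))
    (f' := fun s => fderiv ℝ V (φ s x) (V (φ s x)) - fderiv ℝ V x (V x))
    (C := M * (1 + ‖x‖ ^ q) * θ)
    (fun s _ => (hh1deriv s).hasDerivWithinAt)
    (fun s hs => by
      calc ‖fderiv ℝ V (φ s x) (V (φ s x)) - fderiv ℝ V x (V x)‖
          ≤ M * (1 + ‖x‖ ^ q) * s := hstep s ⟨hs.1, hs.2.le⟩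
        _ ≤ M * (1 + ‖x‖ ^ q) * θ := by
            apply mul_le_mul_of_nonneg_left hs.2.le; positivity)
  have hb1 : ∀ s ∈ Icc (0:ℝ) θ, ‖V (φ s x) - V x - s • fderiv ℝ V x (V x)‖ ≤
      M * (1 + ‖x‖ ^ q) * θ * θ := by
    intro s hs
    have h' : ‖V (φ s x) - V x - s • fderiv ℝ V x (V x)‖ ≤ M * (1 + ‖x‖ ^ q) * θ * s := by
      simpa [hφ.1] using hmv1 s hs
    calc ‖V (φ s x) - V x - s • fderiv ℝ V x (V x)‖ ≤ M * (1 + ‖x‖ ^ q) * θ * s := h'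
      _ ≤ M * (1 + ‖x‖ ^ q) * θ * θ := by
          apply mul_le_mul_of_nonneg_left hs.2; positivity
  -- second mean value inequality
  have hmv2 := norm_image_sub_le_of_norm_deriv_le_segment' (a := 0) (b := θ)
    (f := fun t => φ t x - x - t • V x - (t ^ 2 / 2) • fderiv ℝ V x (V x))
    (f' := fun s => V (φ s x) - V x - s • fderiv ℝ V x (V x))
    (C := M * (1 + ‖x‖ ^ q) * θ * θ)
    (fun s _ => (hhderiv s).hasDerivWithinAt)
    (fun s hs => hb1 s ⟨hs.1, hs.2.le⟩)
  have hend : ‖φ θ x - x - θ • V x - (θ ^ 2 / 2) • fderiv ℝ V x (V x)‖ ≤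
      M * (1 + ‖x‖ ^ q) * θ * θ * θ := by
    simpa [hφ.1] using hmv2 θ ⟨hθ0, le_rfl⟩
  calc ‖φ θ x - x - θ • V x - (θ ^ 2 / 2) • fderiv ℝ V x (V x)‖
      ≤ M * (1 + ‖x‖ ^ q) * θ * θ * θ := hend
    _ = M * (1 + ‖x‖ ^ q) * θ ^ 3 := by ring
    _ ≤ (M + 1) * (1 + ‖x‖ ^ q) * θ ^ 3 := by
        nlinarith [pow_nonneg hθ0 3, haq]
end
end

section
/- Let T > 0 and let V : ℝⁿ → ℝⁿ be Lipschitz continuous. Then for every p ∈ ℕ* there exists C₀ > 0 such that for all (θ,x) ∈ [0,T]×ℝⁿ, 1 + ‖Ψ₂^V(θ,x)‖^{2p} ≤ exp(C₀θ)(1 + ‖x‖^{2p}). -/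
noncomputable section

/-!
Lipschitz continuity gives linear growth `‖V y‖ ≤ A (1 + ‖y‖)`. Feeding this through the two
stages of the scheme yields `1 + ‖Ψ₂^V(θ,x)‖ ≤ (1 + Aθ + (Aθ)²/2)(1 + ‖x‖) ≤ e^{Aθ}(1 + ‖x‖)`.
A convexity estimate then turns any bound `1 + u ≤ c (1 + v)` with `c ≥ 1` into
`1 + u^q ≤ c^{2q} (1 + v^q)`, which with `c = e^{Aθ}` is the claim for `C₀ = 4pA`.
-/

theorem LipschitzWith.norm_le_norm_zero_add_mul {E F : Type*} [SeminormedAddCommGroup E]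
    [SeminormedAddCommGroup F] {K : NNReal} {f : E → F} (hf : LipschitzWith K f) (x : E) :
    ‖f x‖ ≤ ‖f 0‖ + K * ‖x‖ := by
  have := hf.dist_le_mul x 0
  rw [dist_eq_norm, dist_zero_right] at this
  linarith [norm_sub_norm_le (f x) (f 0)]

theorem one_add_norm_add_smul_le {E : Type*} [SeminormedAddCommGroup E] [NormedSpace ℝ E]
    {V : E → E} {A θ : ℝ} (hV : ∀ y, ‖V y‖ ≤ A * (1 + ‖y‖)) (hθ : 0 ≤ θ) (x : E) :
    1 + ‖x + θ • V x‖ ≤ (1 + A * θ) * (1 + ‖x‖) := by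
  calc 1 + ‖x + θ • V x‖ ≤ 1 + (‖x‖ + θ * ‖V x‖) := by
        grw [norm_add_le, norm_smul, Real.norm_of_nonneg hθ]
    _ ≤ 1 + (‖x‖ + θ * (A * (1 + ‖x‖))) := by grw [hV x]
    _ = (1 + A * θ) * (1 + ‖x‖) := by ring

theorem one_add_norm_rk2_le_exp {n : ℕ} {V : Vec n → Vec n} {A θ : ℝ} (hA : 0 ≤ A)
    (hV : ∀ y, ‖V y‖ ≤ A * (1 + ‖y‖)) (hθ : 0 ≤ θ) (x : Vec n) :
    1 + ‖rk2 V θ x‖ ≤ Real.exp (A * θ) * (1 + ‖x‖) := by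
  have hθ2 : 0 ≤ θ / 2 := by positivity
  calc 1 + ‖rk2 V θ x‖ ≤ 1 + (‖x‖ + θ / 2 * ‖V x‖ + θ / 2 * ‖V (x + θ • V x)‖) := by
        grw [rk2, norm_add_le, norm_add_le, norm_smul, norm_smul, Real.norm_of_nonneg hθ2]
    _ ≤ 1 + (‖x‖ + θ / 2 * (A * (1 + ‖x‖)) + θ / 2 * (A * ((1 + A * θ) * (1 + ‖x‖)))) := by
        grw [hV x, hV (x + θ • V x), one_add_norm_add_smul_le hV hθ x]
    _ = (1 + A * θ + (A * θ) ^ 2 / 2) * (1 + ‖x‖) := by ring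
    _ ≤ Real.exp (A * θ) * (1 + ‖x‖) := by
        grw [Real.quadratic_le_exp_of_nonneg (by positivity)]

theorem one_add_pow_le_pow_mul_one_add_pow {c u v : ℝ} (hc : 1 ≤ c) (hu : 0 ≤ u) (hv : 0 ≤ v)
    (h : 1 + u ≤ c * (1 + v)) (q : ℕ) : 1 + u ^ q ≤ c ^ (2 * q) * (1 + v ^ q) := by
  rcases Nat.eq_zero_or_pos q with rfl | hq
  · norm_num
  have hc0 : 0 < c := by linarith
  -- `u ≤ c v + (c - 1)` is the convex combination `c⁻¹ • (c² v) + (1 - c⁻¹) • c`.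
  have hjensen : u ^ q ≤ c⁻¹ * (c ^ 2 * v) ^ q + (1 - c⁻¹) * c ^ q := by
    have hw : c⁻¹ + (1 - c⁻¹) = 1 := by ring
    calc u ^ q ≤ (c⁻¹ * (c ^ 2 * v) + (1 - c⁻¹) * c) ^ q := by
          gcongr
          field_simp
          linarith
      _ ≤ c⁻¹ * (c ^ 2 * v) ^ q + (1 - c⁻¹) * c ^ q :=
          (convexOn_pow q).2 (by positivity : 0 ≤ c ^ 2 * v) hc0.le (by positivity)
            (sub_nonneg.2 (inv_le_one_of_one_le₀ hc)) hw
  have hcq : c ≤ c ^ q := le_self_pow₀ hc hq.ne'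
  have hc2q : c ^ (2 * q) ≤ c ^ (2 * q + 1) := pow_le_pow_right₀ hc (by omega)
  have hcq1 : c ^ (q + 1) ≤ c ^ (2 * q + 1) := pow_le_pow_right₀ hc (by omega)
  suffices c * (1 + u ^ q) ≤ c * (c ^ (2 * q) * (1 + v ^ q)) from le_of_mul_le_mul_left this hc0
  calc c * (1 + u ^ q) ≤ c + c * (c⁻¹ * (c ^ 2 * v) ^ q + (1 - c⁻¹) * c ^ q) := by
        linarith [mul_le_mul_of_nonneg_left hjensen hc0.le]
    _ = c ^ (2 * q) * v ^ q + c ^ (q + 1) + (c - c ^ q) := by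
        field_simp
        ring
    _ ≤ c ^ (2 * q + 1) * v ^ q + c ^ (2 * q + 1) := by
        linarith [mul_le_mul_of_nonneg_right hc2q (pow_nonneg hv q)]
    _ = c * (c ^ (2 * q) * (1 + v ^ q)) := by ring

theorem rk2_growth_general {n : ℕ} (T : ℝ) (V : Vec n → Vec n)
    (hLip : ∃ L : NNReal, LipschitzWith L V) :
    ∀ p : ℕ, 1 ≤ p → ∃ C₀ : ℝ, 0 < C₀ ∧
      ∀ θ ∈ Set.Icc (0 : ℝ) T, ∀ x : Vec n,
        1 + ‖rk2 V θ x‖ ^ (2 * p) ≤ Real.exp (C₀ * θ) * (1 + ‖x‖ ^ (2 * p)) := by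
  obtain ⟨L, hL⟩ := hLip
  intro p hp
  set A : ℝ := ‖V 0‖ + L + 1
  have hA0 : 0 < A := by positivity
  have hV : ∀ y, ‖V y‖ ≤ A * (1 + ‖y‖) := fun y ↦ by
    nlinarith [hL.norm_le_norm_zero_add_mul y, norm_nonneg (V 0), norm_nonneg y, L.coe_nonneg]
  refine ⟨(2 * (2 * p) : ℕ) * A, by positivity, fun θ hθ x ↦ ?_⟩
  calc 1 + ‖rk2 V θ x‖ ^ (2 * p) ≤ Real.exp (A * θ) ^ (2 * (2 * p)) * (1 + ‖x‖ ^ (2 * p)) :=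
        one_add_pow_le_pow_mul_one_add_pow (Real.one_le_exp (mul_nonneg hA0.le hθ.1))
          (norm_nonneg _) (norm_nonneg _) (one_add_norm_rk2_le_exp hA0.le hV hθ.1 x) _
    _ = Real.exp ((2 * (2 * p) : ℕ) * A * θ) * (1 + ‖x‖ ^ (2 * p)) := by
        rw [mul_assoc, Real.exp_nat_mul]

/-- moment-type growth bound for the second-order Runge–Kutta map
of a Lipschitz vector field. -/
theorem rk2_growth {n : ℕ} (T : ℝ) (hT : 0 < T) (V : Vec n → Vec n)
    (hLip : ∃ L : NNReal, LipschitzWith L V) :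
    ∀ p : ℕ, 1 ≤ p → ∃ C₀ : ℝ, 0 < C₀ ∧
      ∀ θ ∈ Set.Icc (0 : ℝ) T, ∀ x : Vec n,
        1 + ‖rk2 V θ x‖ ^ (2 * p) ≤ Real.exp (C₀ * θ) * (1 + ‖x‖ ^ (2 * p)) :=
  rk2_growth_general T V hLip
end
end

section
/- Assume σ⁰,σ¹,…,σᵈ : ℝⁿ → ℝⁿ are Lipschitz continuous. Then for every p ≥ 1 and every N ∈ ℕ*, the Runge–Kutta discretized Ninomiya–Victoir scheme has finite moments: max over 0 ≤ k ≤ N−1 and 1 ≤ j ≤ d+2 of E[‖X̂^{NV,η}_{t_{k+j/(d+2)}}‖^{2p}] < ∞. -/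
open MeasureTheory ProbabilityTheory

noncomputable section

/-- Classical fourth-order Runge–Kutta map `Ψ₄^V`. -/
def rk4 {n : ℕ} (V : Vec n → Vec n) (θ : ℝ) (x : Vec n) : Vec n :=
  x + (θ / 6) • (V x + (2 : ℝ) • V (x + (θ / 2) • V x)
    + (2 : ℝ) • V (x + (θ / 2) • V (x + (θ / 2) • V x))
    + V (x + θ • V (x + (θ / 2) • V (x + (θ / 2) • V x))))

/-- Intermediate values of one step of a Ninomiya–Victoir-type scheme built
from the one-parameter maps `ψ0` (drift) and `ψ j`, `1 ≤ j ≤ d` (Brownian). -/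
def nvSub {n : ℕ} (d : ℕ) (ψ0 : ℝ → Vec n → Vec n) (ψ : ℕ → ℝ → Vec n → Vec n)
    (h : ℝ) (w : ℕ → ℝ) (s : ℝ) (x : Vec n) : ℕ → Vec n
  | 0 => x
  | j + 1 =>
      if j = 0 then ψ0 (h / 2) x
      else if j ≤ d then
        (if s = 1 then ψ j (w j) else ψ (d + 1 - j) (w (d + 1 - j)))
          (nvSub d ψ0 ψ h w s x j)
      else ψ0 (h / 2) (nvSub d ψ0 ψ h w s x j)

/-- Grid values of the Ninomiya–Victoir-type scheme with increments `W` and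
signs `s` (value after `k` steps of size `h`). -/
def nvGrid {n : ℕ} (d : ℕ) (ψ0 : ℝ → Vec n → Vec n) (ψ : ℕ → ℝ → Vec n → Vec n)
    (h : ℝ) (W : ℕ → ℕ → ℝ) (s : ℕ → ℝ) (x0 : Vec n) : ℕ → Vec n
  | 0 => x0
  | k + 1 => nvSub d ψ0 ψ h (W k) (s k) (nvGrid d ψ0 ψ h W s x0 k) (d + 2)

/-- Rademacher law on ℝ (uniform on {−1,1}). -/
def radMeasure : Measure ℝ :=
  ((2 : ENNReal)⁻¹ • Measure.dirac (1 : ℝ)) + ((2 : ENNReal)⁻¹ • Measure.dirac (-1 : ℝ))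

/-! Lipschitz fields grow at most linearly, so each Runge–Kutta stage satisfies
`1 + ‖ψ θ x‖ ≤ (1 + B |θ|) ^ m * (1 + ‖x‖)`. Real random variables with finite moments of all
orders form an algebra (Hölder), Gaussian increments belong to it, and the Rademacher sign only
chooses between two such maps on a measurable event; so finite moments of all orders propagate
through every intermediate value of the scheme. -/

open scoped NNReal ENNReal

section Moments

variable {Ω E : Type*} [MeasurableSpace Ω] [NormedAddCommGroup E] {P : Measure Ω}

def HasFiniteMoments (P : Measure Ω) (X : Ω → E) : Prop :=
  ∀ p : ℝ≥0, MemLp X p P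

theorem HasFiniteMoments.of_norm_le {F : Type*} [NormedAddCommGroup F] {X : Ω → E} {Y : Ω → F}
    (hY : HasFiniteMoments P Y) (hX : AEStronglyMeasurable X P) (hXY : ∀ ω, ‖X ω‖ ≤ ‖Y ω‖) :
    HasFiniteMoments P X :=
  fun p => (hY p).of_le hX (.of_forall hXY)

theorem hasFiniteMoments_const [IsFiniteMeasure P] (c : E) : HasFiniteMoments P fun _ : Ω => c :=
  fun _ => memLp_const c

theorem HasFiniteMoments.add {X Y : Ω → E} (hX : HasFiniteMoments P X)
    (hY : HasFiniteMoments P Y) : HasFiniteMoments P (X + Y) :=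
  fun p => (hX p).add (hY p)

theorem HasFiniteMoments.norm {X : Ω → E} (hX : HasFiniteMoments P X) :
    HasFiniteMoments P fun ω => ‖X ω‖ :=
  fun p => (hX p).norm

theorem HasFiniteMoments.const_mul {X : Ω → ℝ} (hX : HasFiniteMoments P X) (c : ℝ) :
    HasFiniteMoments P fun ω => c * X ω :=
  fun p => (hX p).const_mul c

theorem holderTriple_two_mul (p : ℝ≥0∞) : ENNReal.HolderTriple (2 * p) (2 * p) p where
  inv_add_inv_eq_inv := by
    rw [ENNReal.mul_inv (by simp) (by simp), ← two_mul, ← mul_assoc,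
      ENNReal.mul_inv_cancel two_ne_zero ENNReal.ofNat_ne_top, one_mul]

theorem HasFiniteMoments.mul {𝕜 : Type*} [NormedRing 𝕜] {X Y : Ω → 𝕜} (hX : HasFiniteMoments P X)
    (hY : HasFiniteMoments P Y) : HasFiniteMoments P (X * Y) := fun p => by
  have := holderTriple_two_mul (p : ℝ≥0∞)
  have hX' : MemLp X (2 * p) P := by exact_mod_cast hX (2 * p)
  have hY' : MemLp Y (2 * p) P := by exact_mod_cast hY (2 * p)
  exact hY'.mul hX'

theorem HasFiniteMoments.pow [IsFiniteMeasure P] {𝕜 : Type*} [NormedRing 𝕜] {X : Ω → 𝕜}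
    (hX : HasFiniteMoments P X) :
    ∀ m : ℕ, HasFiniteMoments P (X ^ m)
  | 0 => by rw [pow_zero]; exact hasFiniteMoments_const (1 : 𝕜)
  | m + 1 => by rw [pow_succ]; exact (hX.pow m).mul hX

theorem HasFiniteMoments.integrable_norm_pow [IsFiniteMeasure P] {X : Ω → E}
    (hX : HasFiniteMoments P X) (m : ℕ) : Integrable (fun ω => ‖X ω‖ ^ m) P :=
  MemLp.integrable_norm_pow' (by exact_mod_cast hX m)

theorem hasFiniteMoments_of_map_eq_gaussianReal {X : Ω → ℝ} (hX : Measurable X) {μ : ℝ}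
    {v : ℝ≥0} (hlaw : P.map X = gaussianReal μ v) : HasFiniteMoments P X := fun p => by
  have h := memLp_id_gaussianReal (μ := μ) (v := v) p
  rw [← hlaw, memLp_map_measure_iff aestronglyMeasurable_id hX.aemeasurable] at h
  exact h

def PreservesFiniteMoments (P : Measure Ω) (ψ : ℝ → E → E) : Prop :=
  ∀ (w : Ω → ℝ) (X : Ω → E), HasFiniteMoments P w → HasFiniteMoments P X →
    HasFiniteMoments P fun ω => ψ (w ω) (X ω)

theorem HasFiniteMoments.ite {c : Ω → Prop} [DecidablePred c] (hc : MeasurableSet {ω | c ω})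
    {X Y : Ω → E} (hX : HasFiniteMoments P X) (hY : HasFiniteMoments P Y) :
    HasFiniteMoments P fun ω => if c ω then X ω else Y ω := fun p => by
  classical
  convert MemLp.piecewise hc ((hX p).restrict _) ((hY p).restrict _) using 1
  ext ω
  unfold Set.piecewise
  congr

theorem preservesFiniteMoments_of_one_add_norm_le [IsFiniteMeasure P] {ψ : ℝ → E → E}
    (hψ : Continuous ψ.uncurry) {B : ℝ} {m : ℕ}
    (hle : ∀ θ x, 1 + ‖ψ θ x‖ ≤ (1 + B * |θ|) ^ m * (1 + ‖x‖)) :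
    PreservesFiniteMoments P ψ := by
  intro w X hw hX
  have hdom : HasFiniteMoments P fun ω => (1 + B * |w ω|) ^ m * (1 + ‖X ω‖) :=
    (((hasFiniteMoments_const 1).add (hw.norm.const_mul B)).pow m).mul
      ((hasFiniteMoments_const 1).add hX.norm)
  refine hdom.of_norm_le (hψ.comp_aestronglyMeasurable₂ (hw 1).1 (hX 1).1) fun ω => ?_
  calc ‖ψ (w ω) (X ω)‖ ≤ 1 + ‖ψ (w ω) (X ω)‖ := by linarith
    _ ≤ (1 + B * |w ω|) ^ m * (1 + ‖X ω‖) := hle _ _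
    _ ≤ ‖(1 + B * |w ω|) ^ m * (1 + ‖X ω‖)‖ := Real.le_norm_self _

end Moments

section LinearGrowth

variable {E : Type*} [SeminormedAddCommGroup E]

theorem LipschitzWith.norm_le_mul_one_add_norm {F : Type*} [SeminormedAddCommGroup F]
    {f : E → F} {L : ℝ≥0} (hf : LipschitzWith L f) (x : E) :
    ‖f x‖ ≤ (L + ‖f 0‖) * (1 + ‖x‖) := by
  have hLip : ‖f x - f 0‖ ≤ L * ‖x - 0‖ := hf.norm_sub_le x 0
  rw [sub_zero] at hLip
  have := norm_le_insert' (f x) (f 0)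
  nlinarith [norm_nonneg x, norm_nonneg (f 0), L.coe_nonneg]

theorem one_add_norm_add_le {x v : E} {a : ℝ} (ha : 0 ≤ a) (i : ℕ)
    (hv : ‖v‖ ≤ a * (1 + a) ^ i * (1 + ‖x‖)) :
    1 + ‖x + v‖ ≤ (1 + a) ^ (i + 1) * (1 + ‖x‖) := by
  have hx : 1 + ‖x‖ ≤ (1 + a) ^ i * (1 + ‖x‖) :=
    le_mul_of_one_le_left (by positivity) (one_le_pow₀ (by linarith))
  calc 1 + ‖x + v‖ ≤ 1 + ‖x‖ + ‖v‖ := by linarith [norm_add_le x v]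
    _ ≤ (1 + a) ^ i * (1 + ‖x‖) + a * (1 + a) ^ i * (1 + ‖x‖) := by linarith
    _ = (1 + a) ^ (i + 1) * (1 + ‖x‖) := by ring

variable [NormedSpace ℝ E] {V : E → E} {B : ℝ}

theorem one_add_norm_add_smul_le_s19 (hB : 0 ≤ B) (hV : ∀ y, ‖V y‖ ≤ B * (1 + ‖y‖)) {θ c : ℝ}
    (hc : |c| ≤ |θ|) {x z : E} {i : ℕ} (hz : 1 + ‖z‖ ≤ (1 + B * |θ|) ^ i * (1 + ‖x‖)) :
    1 + ‖x + c • V z‖ ≤ (1 + B * |θ|) ^ (i + 1) * (1 + ‖x‖) := by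
  refine one_add_norm_add_le (by positivity) i ?_
  calc ‖c • V z‖ = |c| * ‖V z‖ := by rw [norm_smul, Real.norm_eq_abs]
    _ ≤ |θ| * (B * ((1 + B * |θ|) ^ i * (1 + ‖x‖))) := by
        gcongr
        exact (hV z).trans (by gcongr)
    _ = B * |θ| * (1 + B * |θ|) ^ i * (1 + ‖x‖) := by ring

end LinearGrowth

section RungeKutta

variable {n : ℕ} {V : Vec n → Vec n} {B : ℝ} {Ω : Type*} [MeasurableSpace Ω] {P : Measure Ω}
  [IsFiniteMeasure P]

theorem one_add_norm_rk2_le (hB : 0 ≤ B) (hV : ∀ y, ‖V y‖ ≤ B * (1 + ‖y‖)) (θ : ℝ)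
    (x : Vec n) : 1 + ‖rk2 V θ x‖ ≤ (1 + B * |θ|) ^ 2 * (1 + ‖x‖) := by
  set K := 1 + B * |θ|
  have hK : 1 ≤ K := le_add_of_nonneg_right (by positivity)
  have hx : 1 + ‖x‖ ≤ K * (1 + ‖x‖) := le_mul_of_one_le_left (by positivity) hK
  have hVx : ‖V x‖ ≤ B * (K * (1 + ‖x‖)) := (hV x).trans (mul_le_mul_of_nonneg_left hx hB)
  have hy : 1 + ‖x + θ • V x‖ ≤ K * (1 + ‖x‖) := by
    simpa using one_add_norm_add_smul_le_s19 hB hV le_rfl (i := 0) (by simp)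
  have hVy : ‖V (x + θ • V x)‖ ≤ B * (K * (1 + ‖x‖)) :=
    (hV _).trans (mul_le_mul_of_nonneg_left hy hB)
  unfold rk2
  rw [add_assoc]
  refine one_add_norm_add_le (by positivity) 1 ?_
  calc ‖(θ / 2) • V x + (θ / 2) • V (x + θ • V x)‖
      ≤ |θ| / 2 * ‖V x‖ + |θ| / 2 * ‖V (x + θ • V x)‖ := by
        refine (norm_add_le _ _).trans_eq ?_
        simp only [norm_smul, Real.norm_eq_abs, abs_div, abs_two]
    _ ≤ |θ| / 2 * (B * (K * (1 + ‖x‖))) + |θ| / 2 * (B * (K * (1 + ‖x‖))) := by gcongr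
    _ = B * |θ| * K ^ 1 * (1 + ‖x‖) := by ring

theorem one_add_norm_rk4_le (hB : 0 ≤ B) (hV : ∀ y, ‖V y‖ ≤ B * (1 + ‖y‖)) (θ : ℝ)
    (x : Vec n) : 1 + ‖rk4 V θ x‖ ≤ (1 + B * |θ|) ^ 4 * (1 + ‖x‖) := by
  set K := 1 + B * |θ|
  have hK : 1 ≤ K := le_add_of_nonneg_right (by positivity)
  have hθ : |θ / 2| ≤ |θ| := by rw [abs_div, abs_two]; linarith [abs_nonneg θ]
  have h₁ : 1 + ‖x‖ ≤ K ^ 0 * (1 + ‖x‖) := by simp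
  have h₂ := one_add_norm_add_smul_le_s19 hB hV hθ h₁
  have h₃ := one_add_norm_add_smul_le_s19 hB hV hθ h₂
  have h₄ := one_add_norm_add_smul_le_s19 hB hV le_rfl h₃
  have hk : ∀ {i : ℕ} {z : Vec n}, i ≤ 3 → 1 + ‖z‖ ≤ K ^ i * (1 + ‖x‖) →
      ‖V z‖ ≤ B * (K ^ 3 * (1 + ‖x‖)) := fun hi hz =>
    (hV _).trans (by gcongr; exact hz.trans (by gcongr))
  unfold rk4
  refine one_add_norm_add_le (by positivity) 3 ?_
  set k₁ := V x
  set k₂ := V (x + (θ / 2) • k₁)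
  set k₃ := V (x + (θ / 2) • k₂)
  set k₄ := V (x + θ • k₃)
  have hsum : ‖k₁ + (2 : ℝ) • k₂ + (2 : ℝ) • k₃ + k₄‖ ≤ ‖k₁‖ + 2 * ‖k₂‖ + 2 * ‖k₃‖ + ‖k₄‖ := by
    refine norm_add₄_le.trans_eq ?_
    simp only [norm_smul, Real.norm_two]
  calc ‖(θ / 6) • (k₁ + (2 : ℝ) • k₂ + (2 : ℝ) • k₃ + k₄)‖
      ≤ |θ| / 6 * (‖k₁‖ + 2 * ‖k₂‖ + 2 * ‖k₃‖ + ‖k₄‖) := by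
        rw [norm_smul, Real.norm_eq_abs, abs_div, abs_of_pos (by norm_num : (0 : ℝ) < 6)]
        exact mul_le_mul_of_nonneg_left hsum (by positivity)
    _ ≤ |θ| / 6 * (6 * (B * (K ^ 3 * (1 + ‖x‖)))) := by
        gcongr
        linarith [hk (by norm_num) h₁, hk (by norm_num) h₂, hk (by norm_num) h₃,
          hk (by norm_num) h₄]
    _ = B * |θ| * K ^ 3 * (1 + ‖x‖) := by ring

theorem LipschitzWith.preservesFiniteMoments_rk2 {L : ℝ≥0} (hV : LipschitzWith L V) :
    PreservesFiniteMoments P (rk2 V) := by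
  have := hV.continuous
  exact preservesFiniteMoments_of_one_add_norm_le (by unfold rk2; fun_prop)
    (one_add_norm_rk2_le (by positivity) hV.norm_le_mul_one_add_norm)

theorem LipschitzWith.preservesFiniteMoments_rk4 {L : ℝ≥0} (hV : LipschitzWith L V) :
    PreservesFiniteMoments P (rk4 V) := by
  have := hV.continuous
  exact preservesFiniteMoments_of_one_add_norm_le (by unfold rk4; fun_prop)
    (one_add_norm_rk4_le (by positivity) hV.norm_le_mul_one_add_norm)

end RungeKutta

section Scheme

variable {Ω : Type*} [MeasurableSpace Ω] {P : Measure Ω} [IsFiniteMeasure P]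
  {n d : ℕ} {ψ₀ : ℝ → Vec n → Vec n} {ψ : ℕ → ℝ → Vec n → Vec n}
  (hψ₀ : PreservesFiniteMoments P ψ₀) (hψ : ∀ i, 1 ≤ i → i ≤ d → PreservesFiniteMoments P (ψ i))
  (h : ℝ)

include hψ₀ hψ in
theorem hasFiniteMoments_nvSub {w : ℕ → Ω → ℝ}
    (hw : ∀ i, 1 ≤ i → i ≤ d → HasFiniteMoments P (w i))
    {s : Ω → ℝ} (hs : Measurable s) {X : Ω → Vec n} (hX : HasFiniteMoments P X) :
    ∀ j, HasFiniteMoments P fun ω => nvSub d ψ₀ ψ h (fun i => w i ω) (s ω) (X ω) j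
  | 0 => hX
  | j + 1 => by
    have ih := hasFiniteMoments_nvSub hw hs hX j
    simp only [nvSub]
    by_cases hj₀ : j = 0
    · simpa [hj₀] using hψ₀ _ _ (hasFiniteMoments_const (h / 2)) hX
    by_cases hjd : j ≤ d
    · simp only [hj₀, hjd, if_false, if_true, ite_apply]
      exact .ite (hs (measurableSet_singleton 1))
        (hψ j (by omega) hjd _ _ (hw j (by omega) hjd) ih)
        (hψ _ (by omega) (by omega) _ _ (hw _ (by omega) (by omega)) ih)
    · simpa [hj₀, hjd] using hψ₀ _ _ (hasFiniteMoments_const (h / 2)) ih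

include hψ₀ hψ in
theorem hasFiniteMoments_nvGrid {W : ℕ → ℕ → Ω → ℝ} {s : ℕ → Ω → ℝ}
    (hs : ∀ l, Measurable (s l))
    (x₀ : Vec n) : ∀ k, (∀ l < k, ∀ i, 1 ≤ i → i ≤ d → HasFiniteMoments P (W l i)) →
      HasFiniteMoments P fun ω => nvGrid d ψ₀ ψ h (fun l i => W l i ω) (fun l => s l ω) x₀ k
  | 0, _ => hasFiniteMoments_const x₀
  | k + 1, hW => hasFiniteMoments_nvSub hψ₀ hψ h (hW k k.lt_succ_self) (hs k)
      (hasFiniteMoments_nvGrid hs x₀ k fun l hl => hW l (hl.trans k.lt_succ_self)) (d + 2)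

end Scheme

theorem nv_rk_finite_moments_general {n d : ℕ}
    (T : ℝ)
    (σ : ℕ → Vec n → Vec n)
    (hσLip : ∀ j ≤ d, ∃ L : NNReal, LipschitzWith L (σ j)) :
    ∀ p : ℕ, 1 ≤ p →
      ∀ N : ℕ, 0 < N → ∀ x0 : Vec n,
      ∀ (Ω : Type) [MeasurableSpace Ω] (P : Measure Ω), IsProbabilityMeasure P →
      ∀ (W : ℕ → ℕ → Ω → ℝ) (ηb : ℕ → Ω → ℝ),
        (∀ k j, Measurable (W k j)) →
        (∀ k, Measurable (ηb k)) →
        (∀ k, k < N → ∀ j, 1 ≤ j → j ≤ d →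
          Measure.map (W k j) P = gaussianReal 0 (Real.toNNReal (T / N))) →
        (∀ k, k < N → Measure.map (ηb k) P = radMeasure) →
        (∀ k ω, ηb k ω = 1 ∨ ηb k ω = -1) →
        iIndepFun (m := fun _ => (inferInstance : MeasurableSpace ℝ))
          (Sum.elim (fun pr : Fin N × Fin d => W (pr.1 : ℕ) ((pr.2 : ℕ) + 1))
            (fun k : Fin N => ηb (k : ℕ))) P →
        ∀ k, k < N → ∀ j, 1 ≤ j → j ≤ d + 2 →
          Integrable (fun ω =>
            ‖nvSub d (rk2 (σ 0)) (fun i => rk4 (σ i)) (T / N) (fun i => W k i ω) (ηb k ω)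
              (nvGrid d (rk2 (σ 0)) (fun i => rk4 (σ i)) (T / N)
                (fun l i => W l i ω) (fun l => ηb l ω) x0 k) j‖ ^ (2 * p)) P := by
  intro p _ N _ x0 Ω _ P _ W ηb hWmeas hηmeas hWlaw _ _ _ k hk j _ _
  have hrk2 : PreservesFiniteMoments P (rk2 (σ 0)) := by
    obtain ⟨L, hL⟩ := hσLip 0 d.zero_le
    exact hL.preservesFiniteMoments_rk2
  have hrk4 : ∀ i, 1 ≤ i → i ≤ d → PreservesFiniteMoments P (rk4 (σ i)) := fun i _ hi => by
    obtain ⟨L, hL⟩ := hσLip i hi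
    exact hL.preservesFiniteMoments_rk4
  have hW : ∀ l < N, ∀ i, 1 ≤ i → i ≤ d → HasFiniteMoments P (W l i) := fun l hl i hi hid =>
    hasFiniteMoments_of_map_eq_gaussianReal (hWmeas l i) (hWlaw l hl i hi hid)
  have hX := hasFiniteMoments_nvGrid hrk2 hrk4 (T / N) hηmeas x0 k
    fun l hl => hW l (hl.trans hk)
  exact (hasFiniteMoments_nvSub hrk2 hrk4 (T / N) (hW k hk) (hηmeas k) hX j).integrable_norm_pow
    (2 * p)

/-- the Runge–Kutta discretized Ninomiya–Victoir scheme (RK2 for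
the drift, RK4 for the Brownian fields) has finite moments of all orders at
every intermediate value. -/
theorem nv_rk_finite_moments {n d : ℕ} (hn : 0 < n) (hd : 0 < d)
    (T : ℝ) (hT : 0 < T)
    (σ : ℕ → Vec n → Vec n)
    (hσLip : ∀ j ≤ d, ∃ L : NNReal, LipschitzWith L (σ j)) :
    ∀ p : ℕ, 1 ≤ p →
      ∀ N : ℕ, 0 < N → ∀ x0 : Vec n,
      ∀ (Ω : Type) [MeasurableSpace Ω] (P : Measure Ω), IsProbabilityMeasure P →
      ∀ (W : ℕ → ℕ → Ω → ℝ) (ηb : ℕ → Ω → ℝ),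
        (∀ k j, Measurable (W k j)) →
        (∀ k, Measurable (ηb k)) →
        (∀ k, k < N → ∀ j, 1 ≤ j → j ≤ d →
          Measure.map (W k j) P = gaussianReal 0 (Real.toNNReal (T / N))) →
        (∀ k, k < N → Measure.map (ηb k) P = radMeasure) →
        (∀ k ω, ηb k ω = 1 ∨ ηb k ω = -1) →
        iIndepFun (m := fun _ => (inferInstance : MeasurableSpace ℝ))
          (Sum.elim (fun pr : Fin N × Fin d => W (pr.1 : ℕ) ((pr.2 : ℕ) + 1))
            (fun k : Fin N => ηb (k : ℕ))) P →
        ∀ k, k < N → ∀ j, 1 ≤ j → j ≤ d + 2 →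
          Integrable (fun ω =>
            ‖nvSub d (rk2 (σ 0)) (fun i => rk4 (σ i)) (T / N) (fun i => W k i ω) (ηb k ω)
              (nvGrid d (rk2 (σ 0)) (fun i => rk4 (σ i)) (T / N)
                (fun l i => W l i ω) (fun l => ηb l ω) x0 k) j‖ ^ (2 * p)) P :=
  nv_rk_finite_moments_general T σ hσLip
end
end
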